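/- arXiv:1812.08850 — 8 statements merged into one kernel-verified Lean document; each statement's English description precedes it below -/
import Mathlib

section
/- Let X be a finite set of balls with a coloring c. If a ball x ∈ X is a non-minority ball of X but not a plurality ball of X, then exactly two colors occur on the balls of X, the size |X| is even, and each of the two color classes in X has exactly |X|/2 elements. -/
/-- The color class of color `γ` in the finite set `Q` of balls, under coloring `c`. -/
def colorClass {Ball Color : Type*} [DecidableEq Ball] [DecidableEq Color]
    (c : Ball → Color) (Q : Finset Ball) (γ : Color) : Finset Ball :=
  Q.filter (fun b => c b = γ)

/-- `x` is a non-minority ball of `Q`: its color class has at least `|Q|/2` elements. -/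
def IsNonMinority {Ball Color : Type*} [DecidableEq Ball] [DecidableEq Color]
    (c : Ball → Color) (Q : Finset Ball) (x : Ball) : Prop :=
  x ∈ Q ∧ Q.card ≤ 2 * (colorClass c Q (c x)).card

/-- `x` is a plurality ball of `Q`: its color class is strictly larger than
every other color class. -/
def IsPlurality {Ball Color : Type*} [DecidableEq Ball] [DecidableEq Color]
    (c : Ball → Color) (Q : Finset Ball) (x : Ball) : Prop :=
  x ∈ Q ∧ ∀ γ : Color, γ ≠ c x → (colorClass c Q γ).card < (colorClass c Q (c x)).card

open Finset

section ColorClass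

variable {Ball Color : Type*} [DecidableEq Ball] [DecidableEq Color]
  (c : Ball → Color) (Q : Finset Ball)

lemma mem_colorClass {b : Ball} {γ : Color} : b ∈ colorClass c Q γ ↔ b ∈ Q ∧ c b = γ :=
  mem_filter

lemma colorClass_subset (γ : Color) : colorClass c Q γ ⊆ Q :=
  filter_subset _ _

lemma disjoint_colorClass {γ δ : Color} (h : γ ≠ δ) :
    Disjoint (colorClass c Q γ) (colorClass c Q δ) :=
  disjoint_filter.2 fun _ _ hγ hδ => h (hγ ▸ hδ)

lemma card_colorClass_add_card_colorClass_le {γ δ : Color} (h : γ ≠ δ) :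
    #(colorClass c Q γ) + #(colorClass c Q δ) ≤ #Q := by
  rw [← card_union_of_disjoint (disjoint_colorClass c Q h)]
  exact card_le_card (union_subset (colorClass_subset c Q γ) (colorClass_subset c Q δ))

lemma colorClass_union_eq_of_card_le {γ δ : Color} (h : γ ≠ δ)
    (hQ : #Q ≤ #(colorClass c Q γ) + #(colorClass c Q δ)) :
    colorClass c Q γ ∪ colorClass c Q δ = Q := by
  refine eq_of_subset_of_card_le
    (union_subset (colorClass_subset c Q γ) (colorClass_subset c Q δ)) ?_
  rwa [card_union_of_disjoint (disjoint_colorClass c Q h)]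

lemma mem_image_of_colorClass_nonempty {γ : Color} (h : (colorClass c Q γ).Nonempty) :
    γ ∈ Q.image c := by
  obtain ⟨b, hb⟩ := h
  obtain ⟨hbQ, rfl⟩ := (mem_colorClass c Q).1 hb
  exact mem_image_of_mem c hbQ

lemma image_eq_pair_of_colorClass_union_eq {γ δ : Color}
    (hγ : (colorClass c Q γ).Nonempty) (hδ : (colorClass c Q δ).Nonempty)
    (hQ : colorClass c Q γ ∪ colorClass c Q δ = Q) :
    Q.image c = {γ, δ} := by
  refine subset_antisymm ?_ (insert_subset (mem_image_of_colorClass_nonempty c Q hγ)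
    (singleton_subset_iff.2 (mem_image_of_colorClass_nonempty c Q hδ)))
  rintro _ hb
  obtain ⟨b, hbQ, rfl⟩ := mem_image.1 hb
  rw [← hQ, mem_union, mem_colorClass, mem_colorClass] at hbQ
  rcases hbQ with ⟨-, rfl⟩ | ⟨-, rfl⟩ <;> simp

end ColorClass

/-- if a ball `x ∈ X` is non-minority but not plurality in `X`, then exactly
two colors occur on the balls of `X`, `|X|` is even, and each of the two color classes
has exactly `|X|/2` elements. -/
theorem nonMinority_not_plurality {Ball Color : Type*} [DecidableEq Ball] [DecidableEq Color]
    (c : Ball → Color) (X : Finset Ball) (x : Ball)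
    (hnm : IsNonMinority c X x) (hnp : ¬ IsPlurality c X x) :
    (X.image c).card = 2 ∧ Even X.card ∧
      ∀ γ ∈ X.image c, 2 * (colorClass c X γ).card = X.card := by
  obtain ⟨hx, hle⟩ := hnm
  obtain ⟨γ, hγ, hge⟩ : ∃ γ ≠ c x, #(colorClass c X (c x)) ≤ #(colorClass c X γ) := by
    simpa [IsPlurality, hx] using hnp
  -- The two disjoint classes each have at least `|X|/2` balls, so they fill `X` exactly.
  have hsum := card_colorClass_add_card_colorClass_le c X hγ
  have hcover := colorClass_union_eq_of_card_le c X hγ (by omega)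
  have hx_nonempty : (colorClass c X (c x)).Nonempty := ⟨x, (mem_colorClass c X).2 ⟨hx, rfl⟩⟩
  have hγ_nonempty : (colorClass c X γ).Nonempty :=
    card_pos.1 (hx_nonempty.card_pos.trans_le hge)
  have himage := image_eq_pair_of_colorClass_union_eq c X hγ_nonempty hx_nonempty hcover
  refine ⟨himage ▸ card_pair hγ, ⟨#(colorClass c X (c x)), by omega⟩, ?_⟩
  simp only [himage, mem_insert, mem_singleton, forall_eq_or_imp, forall_eq]
  omega
end

section
/- Let c be a coloring of balls taking at most two colors, let X be a finite set of balls and let S ⊆ X be such that the two color classes of S have equal size. If x ∈ X \ S is a non-minority ball of X \ S, then x is a non-minority ball of X. -/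
section

variable {Ball Color : Type*} [DecidableEq Ball] [DecidableEq Color] (c : Ball → Color)

theorem colorClass_subset_colorClass {S X : Finset Ball} (h : S ⊆ X) (γ : Color) :
    colorClass c S γ ⊆ colorClass c X γ :=
  Finset.filter_subset_filter _ h

theorem colorClass_sdiff (X S : Finset Ball) (γ : Color) :
    colorClass c (X \ S) γ = colorClass c X γ \ colorClass c S γ := by
  ext b
  simp only [colorClass, Finset.mem_filter, Finset.mem_sdiff]
  tauto

theorem card_colorClass_sdiff_add_card_colorClass {S X : Finset Ball} (h : S ⊆ X) (γ : Color) :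
    (colorClass c (X \ S) γ).card + (colorClass c S γ).card = (colorClass c X γ).card := by
  rw [colorClass_sdiff]
  exact Finset.card_sdiff_add_card_eq_card (colorClass_subset_colorClass c h γ)

theorem card_le_card_colorClass_add_card_colorClass {S : Finset Ball} {α β : Color}
    (hc : ∀ b ∈ S, c b = α ∨ c b = β) :
    S.card ≤ (colorClass c S α).card + (colorClass c S β).card := by
  calc S.card ≤ (colorClass c S α ∪ colorClass c S β).card := by
        refine Finset.card_le_card fun b hb => ?_
        simpa only [colorClass, Finset.mem_union, Finset.mem_filter, hb, true_and] using hc b hb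
    _ ≤ _ := Finset.card_union_le _ _

theorem card_le_two_mul_card_colorClass_of_balanced {S : Finset Ball} {α β γ : Color}
    (hc : ∀ b ∈ S, c b = α ∨ c b = β)
    (hbal : (colorClass c S α).card = (colorClass c S β).card) (hγ : γ = α ∨ γ = β) :
    S.card ≤ 2 * (colorClass c S γ).card := by
  have := card_le_card_colorClass_add_card_colorClass c hc
  rcases hγ with rfl | rfl <;> omega

theorem IsNonMinority.of_sdiff {X S : Finset Ball} {x : Ball} (hSX : S ⊆ X)
    (hS : S.card ≤ 2 * (colorClass c S (c x)).card) (hx : IsNonMinority c (X \ S) x) :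
    IsNonMinority c X x := by
  obtain ⟨hxXS, hcard⟩ := hx
  refine ⟨(Finset.mem_sdiff.mp hxXS).1, ?_⟩
  have hX := Finset.card_sdiff_add_card_eq_card hSX
  have hclass := card_colorClass_sdiff_add_card_colorClass c hSX (c x)
  omega

end

theorem nonMinority_of_balanced_removed_general {Ball Color : Type*}
    [DecidableEq Ball] [DecidableEq Color]
    (c : Ball → Color) (α β : Color) (hc : ∀ b : Ball, c b = α ∨ c b = β)
    (X S : Finset Ball) (hSX : S ⊆ X)
    (hbal : (colorClass c S α).card = (colorClass c S β).card)
    (x : Ball)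
    (hnm : IsNonMinority c (X \ S) x) :
    IsNonMinority c X x :=
  hnm.of_sdiff c hSX
    (card_le_two_mul_card_colorClass_of_balanced c (fun b _ => hc b) hbal (hc x))

/-- with a coloring taking at most two colors, if `S ⊆ X` has its two color
classes of equal size, then a non-minority ball of `X \ S` is a non-minority ball of `X`. -/
theorem nonMinority_of_balanced_removed {Ball Color : Type*}
    [DecidableEq Ball] [DecidableEq Color]
    (c : Ball → Color) (α β : Color) (hc : ∀ b : Ball, c b = α ∨ c b = β)
    (X S : Finset Ball) (hSX : S ⊆ X)
    (hbal : (colorClass c S α).card = (colorClass c S β).card)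
    (x : Ball) (hx : x ∈ X \ S)
    (hnm : IsNonMinority c (X \ S) x) :
    IsNonMinority c X x :=
  nonMinority_of_balanced_removed_general c α β hc X S hSX hbal x hnm
end

section
/- Let q ≥ 2 and let (Q₁,…,Q_m; b₁,…,b_m; y₁,…,y_{m−1}) be a winner-out run of query size q such that each b_i is a plurality ball of Q_i, and set S = Q_m \ {b_m}. Then for every i with 1 ≤ i ≤ m, the color class of c(b_i) in S has maximum size among all color classes of S. -/
/-- A winner-out run of length `m` and query size `q` (indices `0, …, m-1`):
each query `Q i` has size `q`, the answer ball `b i` belongs to `Q i`, the next query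
is obtained by replacing `b i` with the fresh ball `y i`, and `y i` avoids all
previous queries `Q 0, …, Q i`. -/
def WinnerOutRun {Ball : Type*} [DecidableEq Ball]
    (q m : ℕ) (Q : ℕ → Finset Ball) (b y : ℕ → Ball) : Prop :=
  (∀ i < m, (Q i).card = q) ∧
  (∀ i < m, b i ∈ Q i) ∧
  (∀ i, i + 1 < m → Q (i + 1) = insert (y i) (Q i \ {b i})) ∧
  (∀ i, i + 1 < m → ∀ j ≤ i, y i ∉ Q j)

/-!
Write `A = c (b i)`. By induction on `j ≥ i`, `A` is a largest color of `Q j \ {b j}`.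
For `j = i`, removing a plurality ball from `Q i` lowers its class by one, and that class was
strictly larger than every other. For the step, `Q (j + 1)` is `Q j \ {b j}` plus one fresh ball
`y`, so only the class of `c y` can overtake `A`, and by one ball at most; if it does, `c y` is the
unique plurality color of `Q (j + 1)`, so `b (j + 1)` has color `c y` and its removal restores the
balance.
-/

namespace WinnerOut

variable {Ball Color : Type*} [DecidableEq Ball] [DecidableEq Color] (c : Ball → Color)

def IsLargestColor (S : Finset Ball) (γ : Color) : Prop :=
  ∀ δ, (colorClass c S δ).card ≤ (colorClass c S γ).card

theorem card_colorClass_insert {S : Finset Ball} {y : Ball} (hy : y ∉ S) (γ : Color) :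
    (colorClass c (insert y S) γ).card = (colorClass c S γ).card + if c y = γ then 1 else 0 := by
  unfold colorClass
  rw [Finset.filter_insert]
  split_ifs
  · exact Finset.card_insert_of_notMem fun h => hy (Finset.mem_filter.1 h).1
  · rfl

theorem card_colorClass_sdiff_singleton {Q : Finset Ball} {x : Ball} (hx : x ∈ Q) (γ : Color) :
    (colorClass c (Q \ {x}) γ).card + (if c x = γ then 1 else 0) = (colorClass c Q γ).card := by
  unfold colorClass
  rw [Finset.sdiff_singleton_eq_erase, Finset.filter_erase]
  split_ifs with h
  · exact Finset.card_erase_add_one (Finset.mem_filter.2 ⟨hx, h⟩)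
  · have hx' : x ∉ Q.filter (fun b => c b = γ) := fun hm => h (Finset.mem_filter.1 hm).2
    rw [Finset.erase_eq_of_notMem hx', add_zero]

variable {c}

theorem IsPlurality.isLargestColor_sdiff {Q : Finset Ball} {x : Ball}
    (hx : IsPlurality c Q x) : IsLargestColor c (Q \ {x}) (c x) := by
  intro δ
  have hxx := card_colorClass_sdiff_singleton c hx.1 (c x)
  rw [if_pos rfl] at hxx
  obtain rfl | hδ := eq_or_ne δ (c x)
  · exact le_rfl
  have hxδ := card_colorClass_sdiff_singleton c hx.1 δ
  rw [if_neg hδ.symm] at hxδ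
  have := hx.2 δ hδ
  omega

theorem IsLargestColor.insert_sdiff_of_isPlurality {S : Finset Ball} {x y : Ball} {γ : Color}
    (hy : y ∉ S) (hγ : IsLargestColor c S γ) (hx : IsPlurality c (insert y S) x) :
    IsLargestColor c (insert y S \ {x}) γ := by
  obtain rfl | hxγ := eq_or_ne (c x) γ
  · exact IsPlurality.isLargestColor_sdiff hx
  intro δ
  have hγγ := card_colorClass_sdiff_singleton c hx.1 γ
  have hyγ := card_colorClass_insert c hy γ
  rw [if_neg hxγ] at hγγ
  have hδ := hγ δ
  have hyδ := card_colorClass_insert c hy δ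
  have hxδ := card_colorClass_sdiff_singleton c hx.1 δ
  obtain rfl | hδx := eq_or_ne δ (c x)
  · rw [if_pos rfl] at hxδ
    split_ifs at hyδ hyγ <;> omega
  rw [if_neg hδx.symm] at hxδ
  obtain rfl | hcy := eq_or_ne (c y) δ
  · -- the plurality class of `insert y S` did not grow, yet it beats the class of `c y`
    have hlt := hx.2 (c y) hδx
    have hyx := card_colorClass_insert c hy (c x)
    rw [if_neg hδx] at hyx
    have := hγ (c x)
    split_ifs at hyγ <;> omega
  · rw [if_neg hcy] at hyδ
    split_ifs at hyγ <;> omega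

end WinnerOut

open WinnerOut in
theorem winnerOut_plurality_answers_largest_general {Ball Color : Type*}
    [DecidableEq Ball] [DecidableEq Color]
    (c : Ball → Color) (q m : ℕ)
    (Q : ℕ → Finset Ball) (b y : ℕ → Ball)
    (hrun : WinnerOutRun q m Q b y)
    (hplur : ∀ i < m, IsPlurality c (Q i) (b i)) :
    ∀ i < m, ∀ γ : Color,
      (colorClass c (Q (m - 1) \ {b (m - 1)}) γ).card ≤
        (colorClass c (Q (m - 1) \ {b (m - 1)}) (c (b i))).card := by
  obtain ⟨-, -, hnext, hfresh⟩ := hrun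
  intro i hi
  suffices h : ∀ j, i ≤ j → j < m → IsLargestColor c (Q j \ {b j}) (c (b i)) from
    h (m - 1) (by omega) (by omega)
  intro j hij
  induction j, hij using Nat.le_induction with
  | base => exact fun hi => (hplur i hi).isLargestColor_sdiff
  | succ j _ ih =>
    intro hj
    have hy : y j ∉ Q j \ {b j} := fun h => hfresh j hj j le_rfl (Finset.mem_sdiff.1 h).1
    have hplur' := hplur (j + 1) hj
    rw [hnext j hj] at hplur' ⊢
    exact (ih (by omega)).insert_sdiff_of_isPlurality hy hplur'

/-- in a winner-out run of query size `q ≥ 2` where each `b i` is a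
plurality ball of `Q i`, with `S = Q_m \ {b_m}`, the color class of each `c (b i)` in `S`
has maximum size among all color classes of `S`. -/
theorem winnerOut_plurality_answers_largest {Ball Color : Type*}
    [DecidableEq Ball] [DecidableEq Color]
    (c : Ball → Color) (q m : ℕ) (hq : 2 ≤ q) (hm : 1 ≤ m)
    (Q : ℕ → Finset Ball) (b y : ℕ → Ball)
    (hrun : WinnerOutRun q m Q b y)
    (hplur : ∀ i < m, IsPlurality c (Q i) (b i)) :
    ∀ i < m, ∀ γ : Color,
      (colorClass c (Q (m - 1) \ {b (m - 1)}) γ).card ≤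
        (colorClass c (Q (m - 1) \ {b (m - 1)}) (c (b i))).card :=
  winnerOut_plurality_answers_largest_general c q m Q b y hrun hplur
end

section
/- Let k ≥ 1, let c be a coloring of balls using at most two colors, and let (Q₁,…,Q_m; b₁,…,b_m; y₁,…,y_{m−1}) be a winner-out run of query size q = 2k+1 such that each b_i is a majority ball of Q_i, and set S = Q_m \ {b_m} (so |S| = 2k). Then either each of the two colors occurs exactly k times in S, or there is a color γ occurring at least k+1 times in S such that c(b_i) = γ for every i with 1 ≤ i ≤ m. -/
/-- `x` is a majority ball of `Q`: its color class has more than `|Q|/2` elements. -/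
def IsMajority {Ball Color : Type*} [DecidableEq Ball] [DecidableEq Color]
    (c : Ball → Color) (Q : Finset Ball) (x : Ball) : Prop :=
  x ∈ Q ∧ Q.card < 2 * (colorClass c Q (c x)).card

/-!
Write `Sᵢ = Qᵢ \ {bᵢ}`, a set of `2k` balls. With two colors, either `S_m` is balanced or some
color `γ` has at least `k + 1` balls in it. Two disjoint color classes cannot both be majorities,
so a set `Sᵢ` with `k + 1` balls of color `γ` forces `c(bᵢ) = γ`. Then `S_{i+1}` is
`Q_{i+1} = Sᵢ ∪ {yᵢ}` with the `γ`-ball `b_{i+1}` removed, and `yᵢ` adds at most one `γ`-ball,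
so `Sᵢ` has at least as many `γ`-balls as `S_{i+1}`. Backward induction from `S_m`
gives `c(bᵢ) = γ` for every `i`.
-/

section ColorClass

variable {Ball Color : Type*} [DecidableEq Ball] [DecidableEq Color] (c : Ball → Color)

theorem card_colorClass_le_of_subset {S T : Finset Ball} (h : S ⊆ T) (γ : Color) :
    (colorClass c S γ).card ≤ (colorClass c T γ).card :=
  Finset.card_le_card (Finset.filter_subset_filter _ h)

theorem card_colorClass_sdiff_singleton_add_one {T : Finset Ball} {x : Ball} (hx : x ∈ T)
    {γ : Color} (hγ : c x = γ) :
    (colorClass c (T \ {x}) γ).card + 1 = (colorClass c T γ).card := by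
  rw [Finset.sdiff_singleton_eq_erase, colorClass, Finset.filter_erase]
  exact Finset.card_erase_add_one (Finset.mem_filter.2 ⟨hx, hγ⟩)

theorem card_colorClass_insert_le (T : Finset Ball) (z : Ball) (γ : Color) :
    (colorClass c (insert z T) γ).card ≤ (colorClass c T γ).card + 1 := by
  rw [colorClass, Finset.filter_insert]
  split_ifs
  · exact Finset.card_insert_le _ _
  · exact Nat.le_succ _

theorem card_colorClass_add_card_colorClass {α β : Color} (hαβ : α ≠ β)
    (hc : ∀ x, c x = α ∨ c x = β) (T : Finset Ball) :
    (colorClass c T α).card + (colorClass c T β).card = T.card := by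
  rw [← Finset.card_filter_add_card_filter_not (s := T) (fun x => c x = α)]
  congr 2
  refine Finset.filter_congr fun x _ => ?_
  rcases hc x with h | h <;> simp [h, hαβ, hαβ.symm]

theorem IsMajority.color_eq {Q : Finset Ball} {x : Ball} (hx : IsMajority c Q x) {γ : Color}
    (hγ : Q.card < 2 * (colorClass c Q γ).card) : c x = γ := by
  by_contra hne
  have hdisj : Disjoint (colorClass c Q (c x)) (colorClass c Q γ) :=
    Finset.disjoint_filter.2 fun _ _ h₁ h₂ => hne (h₁.symm.trans h₂)
  have hle : (colorClass c Q (c x)).card + (colorClass c Q γ).card ≤ Q.card := by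
    rw [← Finset.card_union_of_disjoint hdisj]
    exact Finset.card_le_card (Finset.union_subset (Finset.filter_subset _ _)
      (Finset.filter_subset _ _))
  have := hx.2
  omega

end ColorClass

namespace WinnerOutRun

variable {Ball Color : Type*} [DecidableEq Ball] [DecidableEq Color] {q m : ℕ}
  {Q : ℕ → Finset Ball} {b y : ℕ → Ball}

theorem card_sdiff_answer (h : WinnerOutRun q m Q b y) {i : ℕ} (hi : i < m) :
    (Q i \ {b i}).card = q - 1 := by
  rw [Finset.sdiff_singleton_eq_erase, Finset.card_erase_of_mem (h.2.1 i hi), h.1 i hi]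

theorem card_colorClass_sdiff_answer_le_prev (h : WinnerOutRun q m Q b y) (c : Ball → Color)
    {i : ℕ} (hi : i + 1 < m) {γ : Color} (hγ : c (b (i + 1)) = γ) :
    (colorClass c (Q (i + 1) \ {b (i + 1)}) γ).card ≤ (colorClass c (Q i \ {b i}) γ).card := by
  have hremove := card_colorClass_sdiff_singleton_add_one c (h.2.1 _ hi) hγ
  have hinsert := card_colorClass_insert_le c (Q i \ {b i}) (y i) γ
  rw [← h.2.2.1 i hi] at hinsert
  omega

theorem color_answer_eq_of_lt_two_mul (h : WinnerOutRun q m Q b y) {c : Ball → Color}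
    (hmaj : ∀ i < m, IsMajority c (Q i) (b i)) {j : ℕ} (hj : j < m) {γ : Color}
    (hγ : q < 2 * (colorClass c (Q j \ {b j}) γ).card) {i : ℕ} (hij : i ≤ j) :
    c (b i) = γ := by
  have answer_eq : ∀ i < m, q < 2 * (colorClass c (Q i \ {b i}) γ).card → c (b i) = γ := by
    intro i hi hS
    refine (hmaj i hi).color_eq c ?_
    have := card_colorClass_le_of_subset c (Finset.sdiff_subset (s := Q i) (t := {b i})) γ
    rw [h.1 i hi]
    omega
  refine answer_eq i (hij.trans_lt hj) ?_
  induction hij using Nat.decreasingInduction with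
  | self => exact hγ
  | of_succ i hi ih =>
    have hi' : i + 1 < m := Nat.succ_le_of_lt hi |>.trans_lt hj
    have := h.card_colorClass_sdiff_answer_le_prev c hi' (answer_eq _ hi' ih)
    omega

end WinnerOutRun

theorem winnerOut_majority_odd_two_colors_general {Ball Color : Type*}
    [DecidableEq Ball] [DecidableEq Color]
    (c : Ball → Color) (k m : ℕ) (hm : 1 ≤ m)
    (α β : Color) (hαβ : α ≠ β) (hc : ∀ x : Ball, c x = α ∨ c x = β)
    (Q : ℕ → Finset Ball) (b y : ℕ → Ball)
    (hrun : WinnerOutRun (2 * k + 1) m Q b y)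
    (hmaj : ∀ i < m, IsMajority c (Q i) (b i)) :
    ((colorClass c (Q (m - 1) \ {b (m - 1)}) α).card = k ∧
      (colorClass c (Q (m - 1) \ {b (m - 1)}) β).card = k) ∨
    (∃ γ : Color, k + 1 ≤ (colorClass c (Q (m - 1) \ {b (m - 1)}) γ).card ∧
      ∀ i < m, c (b i) = γ) := by
  have hlast : m - 1 < m := by omega
  have hsplit := card_colorClass_add_card_colorClass c hαβ hc (Q (m - 1) \ {b (m - 1)})
  rw [hrun.card_sdiff_answer hlast, Nat.add_sub_cancel] at hsplit
  have hbig : ∀ γ, k + 1 ≤ (colorClass c (Q (m - 1) \ {b (m - 1)}) γ).card →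
      ∃ γ : Color, k + 1 ≤ (colorClass c (Q (m - 1) \ {b (m - 1)}) γ).card ∧
        ∀ i < m, c (b i) = γ :=
    fun γ hγ => ⟨γ, hγ, fun i hi =>
      hrun.color_answer_eq_of_lt_two_mul hmaj hlast (by omega) (Nat.le_sub_one_of_lt hi)⟩
  by_cases hα : (colorClass c (Q (m - 1) \ {b (m - 1)}) α).card = k
  · exact Or.inl ⟨hα, by omega⟩
  · rcases Nat.lt_or_gt_of_ne hα with hlt | hgt
    · exact Or.inr (hbig β (by omega))
    · exact Or.inr (hbig α hgt)

/-- two colors, winner-out run of query size `2k+1` with all answers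
majority balls, `S = Q_m \ {b_m}`.  Then either both colors occur exactly `k` times
in `S`, or some color `γ` occurs at least `k+1` times in `S` and all answer balls
have color `γ`. -/
theorem winnerOut_majority_odd_two_colors {Ball Color : Type*}
    [DecidableEq Ball] [DecidableEq Color]
    (c : Ball → Color) (k m : ℕ) (hk : 1 ≤ k) (hm : 1 ≤ m)
    (α β : Color) (hαβ : α ≠ β) (hc : ∀ x : Ball, c x = α ∨ c x = β)
    (Q : ℕ → Finset Ball) (b y : ℕ → Ball)
    (hrun : WinnerOutRun (2 * k + 1) m Q b y)
    (hmaj : ∀ i < m, IsMajority c (Q i) (b i)) :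
    ((colorClass c (Q (m - 1) \ {b (m - 1)}) α).card = k ∧
      (colorClass c (Q (m - 1) \ {b (m - 1)}) β).card = k) ∨
    (∃ γ : Color, k + 1 ≤ (colorClass c (Q (m - 1) \ {b (m - 1)}) γ).card ∧
      ∀ i < m, c (b i) = γ) :=
  winnerOut_majority_odd_two_colors_general c k m hm α β hαβ hc Q b y hrun hmaj
end

section
/- Let k ≥ 1, let Q be a set of 2k+1 balls in which every color class has size at most k, and let B be a set of k+1 balls (B may intersect Q). Then B is monochromatic if and only if every set Q' of balls with B ⊆ Q' ⊆ B ∪ Q and |Q'| = 2k+1 contains a color class of size at least k+1. -/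
open Finset

section ColorClass

variable {Ball Color : Type*} [DecidableEq Ball] [DecidableEq Color] (c : Ball → Color)

theorem card_colorClass_union_le (s t : Finset Ball) (γ : Color) :
    #(colorClass c (s ∪ t) γ) ≤ #(colorClass c s γ) + #(colorClass c t γ) := by
  rw [colorClass, filter_union]
  exact card_union_le _ _

theorem card_colorClass_sdiff_add_card_colorClass_inter (s t : Finset Ball) (γ : Color) :
    #(colorClass c (s \ t) γ) + #(colorClass c (s ∩ t) γ) = #(colorClass c s γ) := by
  rw [colorClass, colorClass, colorClass,
    ← card_union_of_disjoint (disjoint_filter_filter (disjoint_sdiff_inter s t)), ← filter_union,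
    sdiff_union_inter]

theorem sum_card_colorClass_le (s : Finset Ball) (T : Finset Color) :
    ∑ γ ∈ T, #(colorClass c s γ) ≤ #s :=
  (sum_card_fiberwise_eq_card_filter s T c).trans_le (card_filter_le _ _)

theorem sum_card_colorClass_image (s : Finset Ball) :
    ∑ γ ∈ s.image c, #(colorClass c s γ) = #s :=
  (card_eq_sum_card_image c s).symm

theorem colorClass_ssubset {s : Finset Ball} {x y : Ball} (hx : x ∈ s) (hy : y ∈ s)
    (hxy : c x ≠ c y) (γ : Color) : colorClass c s γ ⊂ s := by
  refine filter_ssubset.2 ?_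
  by_cases hγ : c x = γ
  · exact ⟨y, hy, fun h => hxy (hγ.trans h.symm)⟩
  · exact ⟨x, hx, hγ⟩

theorem exists_subset_card_eq_card_colorClass_le (P : Finset Ball) (cap : Color → ℕ) {n : ℕ}
    (hn : n ≤ ∑ γ ∈ P.image c, min #(colorClass c P γ) (cap γ)) :
    ∃ S ⊆ P, #S = n ∧ ∀ γ, #(colorClass c S γ) ≤ cap γ := by
  choose T hTP hTcard using
    fun γ => exists_subset_card_eq (min_le_left #(colorClass c P γ) (cap γ))
  have hTcolor : ∀ γ, ∀ b ∈ T γ, c b = γ := fun γ b hb => (mem_filter.1 (hTP γ hb)).2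
  have hUcard : #((P.image c).biUnion T) = ∑ γ ∈ P.image c, min #(colorClass c P γ) (cap γ) := by
    rw [card_biUnion]
    · exact sum_congr rfl fun γ _ => hTcard γ
    · intro γ _ γ' _ hne
      exact disjoint_left.2 fun b hb hb' => hne ((hTcolor γ b hb).symm.trans (hTcolor γ' b hb'))
  obtain ⟨S, hSU, hScard⟩ := exists_subset_card_eq (hn.trans hUcard.ge)
  refine ⟨S, hSU.trans (biUnion_subset.2 fun γ _ => (hTP γ).trans (filter_subset _ _)),
    hScard, fun γ => ?_⟩
  have hST : colorClass c S γ ⊆ T γ := by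
    intro b hb
    obtain ⟨hbS, rfl⟩ := mem_filter.1 hb
    obtain ⟨γ', -, hbT⟩ := mem_biUnion.1 (hSU hbS)
    rwa [hTcolor γ' b hbT]
  calc #(colorClass c S γ) ≤ #(T γ) := card_le_card hST
    _ ≤ cap γ := (hTcard γ).trans_le (min_le_right _ _)

theorem exists_superset_card_eq_card_colorClass_le {k : ℕ} {Q B : Finset Ball}
    (hQ : ∀ γ, #(colorClass c Q γ) ≤ k) (hB : ∀ γ, #(colorClass c B γ) ≤ k) (hBQ : #B ≤ #Q) :
    ∃ Q', B ⊆ Q' ∧ Q' ⊆ B ∪ Q ∧ #Q' = #Q ∧ ∀ γ, #(colorClass c Q' γ) ≤ k := by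
  have hexcess : ∀ γ, #(colorClass c (Q \ B) γ) ≤
      min #(colorClass c (Q \ B) γ) (k - #(colorClass c B γ)) + #(colorClass c (B \ Q) γ) := by
    intro γ
    have hQsplit := card_colorClass_sdiff_add_card_colorClass_inter c Q B γ
    have hBsplit := card_colorClass_sdiff_add_card_colorClass_inter c B Q γ
    rw [inter_comm] at hBsplit
    have := hQ γ
    omega
  have hroom : #Q - #B ≤
      ∑ γ ∈ (Q \ B).image c, min #(colorClass c (Q \ B) γ) (k - #(colorClass c B γ)) := by
    have hsum := sum_le_sum fun γ (_ : γ ∈ (Q \ B).image c) => hexcess γ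
    rw [sum_add_distrib, sum_card_colorClass_image] at hsum
    have := sum_card_colorClass_le c (B \ Q) ((Q \ B).image c)
    have hQsplit := card_sdiff_add_card_inter Q B
    have hBsplit := card_sdiff_add_card_inter B Q
    rw [inter_comm] at hBsplit
    omega
  obtain ⟨S, hSsub, hScard, hS⟩ := exists_subset_card_eq_card_colorClass_le c (Q \ B) _ hroom
  refine ⟨B ∪ S, subset_union_left, union_subset_union subset_rfl (hSsub.trans sdiff_subset),
    ?_, fun γ => ?_⟩
  · rw [card_union_of_disjoint (disjoint_sdiff.mono_right hSsub)]
    omega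
  · have := card_colorClass_union_le c B S γ
    have := hS γ
    have := hB γ
    omega

end ColorClass

theorem monochromatic_iff_always_majority_general {Ball Color : Type*}
    [DecidableEq Ball] [DecidableEq Color]
    (c : Ball → Color) (k : ℕ)
    (Q : Finset Ball) (hQcard : Q.card = 2 * k + 1)
    (hQ : ∀ γ : Color, (colorClass c Q γ).card ≤ k)
    (B : Finset Ball) (hBcard : B.card = k + 1) :
    (∀ x ∈ B, ∀ y ∈ B, c x = c y) ↔
      ∀ Q' : Finset Ball, B ⊆ Q' → Q' ⊆ B ∪ Q → Q'.card = 2 * k + 1 →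
        ∃ γ : Color, k + 1 ≤ (colorClass c Q' γ).card := by
  constructor
  · rintro hmono Q' hBQ' - -
    obtain ⟨x, hx⟩ : B.Nonempty := card_pos.1 (by omega)
    exact ⟨c x, hBcard ▸ card_le_card fun b hb => mem_filter.2 ⟨hBQ' hb, hmono b hb x hx⟩⟩
  · intro hmajority
    by_contra hmono
    obtain ⟨x, hx, y, hy, hxy⟩ : ∃ x ∈ B, ∃ y ∈ B, c x ≠ c y := by simpa using hmono
    have hB : ∀ γ, #(colorClass c B γ) ≤ k := fun γ => by
      have := card_lt_card (colorClass_ssubset c hx hy hxy γ)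
      omega
    obtain ⟨Q', hBQ', hQ'sub, hQ'card, hQ'⟩ :=
      exists_superset_card_eq_card_colorClass_le c hQ hB (by omega)
    obtain ⟨γ, hγ⟩ := hmajority Q' hBQ' hQ'sub (hQ'card.trans hQcard)
    have := hQ' γ
    omega

/-- if every color class of the `(2k+1)`-set `Q` has size at most `k` and
`B` has `k+1` balls, then `B` is monochromatic iff every `(2k+1)`-set `Q'` with
`B ⊆ Q' ⊆ B ∪ Q` contains a color class of size at least `k+1`. -/
theorem monochromatic_iff_always_majority {Ball Color : Type*}
    [DecidableEq Ball] [DecidableEq Color]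
    (c : Ball → Color) (k : ℕ) (hk : 1 ≤ k)
    (Q : Finset Ball) (hQcard : Q.card = 2 * k + 1)
    (hQ : ∀ γ : Color, (colorClass c Q γ).card ≤ k)
    (B : Finset Ball) (hBcard : B.card = k + 1) :
    (∀ x ∈ B, ∀ y ∈ B, c x = c y) ↔
      ∀ Q' : Finset Ball, B ⊆ Q' → Q' ⊆ B ∪ Q → Q'.card = 2 * k + 1 →
        ∃ γ : Color, k + 1 ≤ (colorClass c Q' γ).card :=
  monochromatic_iff_always_majority_general c k Q hQcard hQ B hBcard
end

section
/- Let k ≥ 1, let Q be a set of 2k+1 balls in which every color class has size at most k, and let D be a set of 2k balls disjoint from Q consisting of exactly k balls of color α and exactly k balls of color β. Then α = β if and only if for every z ∈ Q the set D ∪ {z} contains a color class of size at least k+1. -/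
namespace colorClass

variable {Ball Color : Type*} [DecidableEq Ball] [DecidableEq Color] (c : Ball → Color)

theorem subset_of_forall_eq {S T : Finset Ball} {γ : Color} (hST : S ⊆ T)
    (hS : ∀ x ∈ S, c x = γ) : S ⊆ colorClass c T γ := fun x hx =>
  Finset.mem_filter.2 ⟨hST hx, hS x hx⟩

theorem eq_empty_of_forall_ne {S : Finset Ball} {γ : Color} (hS : ∀ x ∈ S, c x ≠ γ) :
    colorClass c S γ = ∅ :=
  Finset.filter_false_of_mem hS

theorem union (S T : Finset Ball) (γ : Color) :
    colorClass c (S ∪ T) γ = colorClass c S γ ∪ colorClass c T γ :=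
  Finset.filter_union _ _ _

theorem exists_mem_ne_of_card_add_card_lt (Q : Finset Ball) (α β : Color)
    (hQ : (colorClass c Q α).card + (colorClass c Q β).card < Q.card) :
    ∃ z ∈ Q, c z ≠ α ∧ c z ≠ β := by
  by_contra! hcover
  have hQsub : Q ⊆ colorClass c Q α ∪ colorClass c Q β := by
    intro z hz
    by_cases hzα : c z = α
    · exact Finset.mem_union_left _ (Finset.mem_filter.2 ⟨hz, hzα⟩)
    · exact Finset.mem_union_right _ (Finset.mem_filter.2 ⟨hz, hcover z hz hzα⟩)
  have := (Finset.card_le_card hQsub).trans (Finset.card_union_le _ _)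
  omega

theorem card_le_of_two_colors {α β : Color} (hne : α ≠ β) {Dα Dβ : Finset Ball} {k : ℕ}
    (hDα : Dα.card ≤ k) (hDβ : Dβ.card ≤ k)
    (hcα : ∀ x ∈ Dα, c x = α) (hcβ : ∀ x ∈ Dβ, c x = β) (γ : Color) :
    (colorClass c (Dα ∪ Dβ) γ).card ≤ k := by
  rw [union]
  by_cases hγ : γ = α
  · subst hγ
    rw [eq_empty_of_forall_ne c fun x hx => (hcβ x hx).trans_ne hne.symm, Finset.union_empty]
    exact (Finset.card_filter_le _ _).trans hDα
  · rw [eq_empty_of_forall_ne c fun x hx => (hcα x hx).trans_ne (Ne.symm hγ),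
      Finset.empty_union]
    exact (Finset.card_filter_le _ _).trans hDβ

theorem card_insert_le {S : Finset Ball} {z : Ball} {k : ℕ} (hk : 1 ≤ k)
    (hz : ∀ x ∈ S, c x ≠ c z) (hS : ∀ γ, (colorClass c S γ).card ≤ k) (γ : Color) :
    (colorClass c (insert z S) γ).card ≤ k := by
  unfold colorClass
  rw [Finset.filter_insert]
  split_ifs with hzγ
  · subst hzγ
    rw [← colorClass, eq_empty_of_forall_ne c hz]
    simpa using hk
  · exact hS γ

end colorClass

theorem color_compare_iff_always_majority_general {Ball Color : Type*}
    [DecidableEq Ball] [DecidableEq Color]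
    (c : Ball → Color) (k : ℕ) (hk : 1 ≤ k)
    (Q : Finset Ball) (hQcard : Q.card = 2 * k + 1)
    (hQ : ∀ γ : Color, (colorClass c Q γ).card ≤ k)
    (α β : Color) (D Dα Dβ : Finset Ball)
    (hD : D = Dα ∪ Dβ) (hdisj : Disjoint Dα Dβ)
    (hDα : Dα.card = k) (hDβ : Dβ.card = k)
    (hcα : ∀ x ∈ Dα, c x = α) (hcβ : ∀ x ∈ Dβ, c x = β) :
    α = β ↔ ∀ z ∈ Q, ∃ γ : Color, k + 1 ≤ (colorClass c (insert z D) γ).card := by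
  subst hD
  constructor
  · rintro rfl z -
    have hsub : Dα ∪ Dβ ⊆ colorClass c (insert z (Dα ∪ Dβ)) α :=
      colorClass.subset_of_forall_eq c (Finset.subset_insert _ _) fun x hx =>
        (Finset.mem_union.1 hx).elim (hcα x) (hcβ x)
    have hcard := Finset.card_le_card hsub
    rw [Finset.card_union_of_disjoint hdisj] at hcard
    exact ⟨α, by omega⟩
  · intro hmaj
    by_contra hne
    obtain ⟨z, hzQ, hzα, hzβ⟩ :=
      colorClass.exists_mem_ne_of_card_add_card_lt c Q α β (by linarith [hQ α, hQ β])
    have hz : ∀ x ∈ Dα ∪ Dβ, c x ≠ c z := fun x hx =>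
      (Finset.mem_union.1 hx).elim (fun h => (hcα x h).trans_ne hzα.symm)
        (fun h => (hcβ x h).trans_ne hzβ.symm)
    obtain ⟨γ, hγ⟩ := hmaj z hzQ
    have := colorClass.card_insert_le c hk hz
      (colorClass.card_le_of_two_colors c hne hDα.le hDβ.le hcα hcβ) γ
    omega

/-- let every color class of the `(2k+1)`-set `Q` have size at most `k`,
and let `D` be disjoint from `Q` and consist of exactly `k` balls of color `α` and
exactly `k` balls of color `β`.  Then `α = β` iff for every `z ∈ Q` the set `D ∪ {z}`
contains a color class of size at least `k+1`. -/
theorem color_compare_iff_always_majority {Ball Color : Type*}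
    [DecidableEq Ball] [DecidableEq Color]
    (c : Ball → Color) (k : ℕ) (hk : 1 ≤ k)
    (Q : Finset Ball) (hQcard : Q.card = 2 * k + 1)
    (hQ : ∀ γ : Color, (colorClass c Q γ).card ≤ k)
    (α β : Color) (D Dα Dβ : Finset Ball)
    (hD : D = Dα ∪ Dβ) (hdisj : Disjoint Dα Dβ)
    (hDα : Dα.card = k) (hDβ : Dβ.card = k)
    (hcα : ∀ x ∈ Dα, c x = α) (hcβ : ∀ x ∈ Dβ, c x = β)
    (hDQ : Disjoint D Q) :
    α = β ↔ ∀ z ∈ Q, ∃ γ : Color, k + 1 ≤ (colorClass c (insert z D) γ).card :=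
  color_compare_iff_always_majority_general c k hk Q hQcard hQ α β D Dα Dβ hD hdisj hDα hDβ hcα hcβ
end

section
/- Let S be a finite set of colored balls in which two distinct colors β and γ both attain the maximum color class size of S, and let v ∈ S be a ball whose color is neither β nor γ. Let y and u be distinct balls outside S with c(y) = β and c(u) = γ. Then the set (S \ {v}) ∪ {y, u} has no plurality ball. -/
/-!
After the swap the colors `β` and `γ` each gain one ball, while every other color class can only
shrink. So `β` and `γ` are still tied for the maximum, and a tie at the top rules out a plurality
ball: a ball of color `β` is not beaten strictly by `γ`, and vice versa, while a ball of any other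
color cannot beat `β`.
-/

namespace colorClass

variable {Ball Color : Type*} [DecidableEq Ball] [DecidableEq Color]
  {c : Ball → Color} {Q Q' : Finset Ball} {x : Ball} {δ : Color}

theorem card_mono (h : Q ⊆ Q') : (colorClass c Q δ).card ≤ (colorClass c Q' δ).card :=
  Finset.card_le_card (Finset.filter_subset_filter _ h)

theorem insert_of_ne (h : c x ≠ δ) : colorClass c (insert x Q) δ = colorClass c Q δ := by
  simp [colorClass, Finset.filter_insert, h]

theorem card_insert_of_eq (h : c x = δ) (hx : x ∉ Q) :
    (colorClass c (insert x Q) δ).card = (colorClass c Q δ).card + 1 := by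
  rw [colorClass, Finset.filter_insert, if_pos h, Finset.card_insert_of_notMem]
  · rfl
  · exact fun hmem => hx (Finset.mem_of_mem_filter x hmem)

theorem sdiff_singleton_of_ne (h : c x ≠ δ) : colorClass c (Q \ {x}) δ = colorClass c Q δ := by
  rw [colorClass, Finset.sdiff_singleton_eq_erase, Finset.filter_erase,
    Finset.erase_eq_of_notMem (by simp [h])]
  rfl

end colorClass

theorem not_isPlurality_of_tie {Ball Color : Type*} [DecidableEq Ball] [DecidableEq Color]
    {c : Ball → Color} {Q : Finset Ball} {β γ : Color} (hβγ : β ≠ γ)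
    (htie : (colorClass c Q β).card = (colorClass c Q γ).card)
    (hmax : ∀ δ, (colorClass c Q δ).card ≤ (colorClass c Q β).card) (p : Ball) :
    ¬ IsPlurality c Q p := by
  rintro ⟨-, hp⟩
  by_cases hpβ : c p = β
  · have := hp γ (hpβ ▸ hβγ.symm)
    rw [hpβ] at this
    omega
  · have := hp β (Ne.symm hpβ)
    have := hmax (c p)
    omega

theorem no_plurality_after_double_swap_general {Ball Color : Type*}
    [DecidableEq Ball] [DecidableEq Color]
    (c : Ball → Color) (S : Finset Ball) (β γ : Color) (hβγ : β ≠ γ)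
    (htie : (colorClass c S β).card = (colorClass c S γ).card)
    (hmax : ∀ δ : Color, (colorClass c S δ).card ≤ (colorClass c S β).card)
    (v : Ball) (hvβ : c v ≠ β) (hvγ : c v ≠ γ)
    (y u : Ball) (hyu : y ≠ u) (hy : y ∉ S) (hu : u ∉ S)
    (hcy : c y = β) (hcu : c u = γ) :
    ¬ ∃ p, IsPlurality c (insert y (insert u (S \ {v}))) p := by
  rintro ⟨p, hp⟩
  set T := insert y (insert u (S \ {v}))
  have hyR : y ∉ insert u (S \ {v}) := by simp [hyu, hy]
  have huR : u ∉ S \ {v} := by simp [hu]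
  have hgainβ : (colorClass c T β).card = (colorClass c S β).card + 1 := by
    rw [colorClass.card_insert_of_eq hcy hyR, colorClass.insert_of_ne (hcu ▸ hβγ.symm),
      colorClass.sdiff_singleton_of_ne hvβ]
  have hgainγ : (colorClass c T γ).card = (colorClass c S γ).card + 1 := by
    rw [colorClass.insert_of_ne (hcy ▸ hβγ), colorClass.card_insert_of_eq hcu huR,
      colorClass.sdiff_singleton_of_ne hvγ]
  refine not_isPlurality_of_tie hβγ (by omega) (fun δ => ?_) p hp
  by_cases hδβ : δ = β
  · rw [hδβ]
  by_cases hδγ : δ = γ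
  · subst hδγ
    omega
  have hshrink : (colorClass c T δ).card ≤ (colorClass c S δ).card := by
    rw [colorClass.insert_of_ne (hcy ▸ Ne.symm hδβ),
      colorClass.insert_of_ne (hcu ▸ Ne.symm hδγ)]
    exact colorClass.card_mono Finset.sdiff_subset
  have := hmax δ
  omega

/-- if two distinct colors `β, γ` both attain the maximum color class
size of `S`, `v ∈ S` has a color different from both, and `y, u ∉ S` are distinct balls
with `c y = β` and `c u = γ`, then `(S \ {v}) ∪ {y, u}` has no plurality ball. -/
theorem no_plurality_after_double_swap {Ball Color : Type*}
    [DecidableEq Ball] [DecidableEq Color]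
    (c : Ball → Color) (S : Finset Ball) (β γ : Color) (hβγ : β ≠ γ)
    (htie : (colorClass c S β).card = (colorClass c S γ).card)
    (hmax : ∀ δ : Color, (colorClass c S δ).card ≤ (colorClass c S β).card)
    (v : Ball) (hv : v ∈ S) (hvβ : c v ≠ β) (hvγ : c v ≠ γ)
    (y u : Ball) (hyu : y ≠ u) (hy : y ∉ S) (hu : u ∉ S)
    (hcy : c y = β) (hcu : c u = γ) :
    ¬ ∃ p, IsPlurality c (insert y (insert u (S \ {v}))) p :=
  no_plurality_after_double_swap_general c S β γ hβγ htie hmax v hvβ hvγ y u hyu hy hu hcy hcu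
end

section
/- Let l ≥ 1, let B be a set of l balls all of color β, and let T be a set of l balls disjoint from B none of which has color β. Then the set B ∪ T has a plurality ball if and only if T is not monochromatic. -/
open Finset

section ColorClass

variable {Ball Color : Type*} [DecidableEq Ball] [DecidableEq Color] (c : Ball → Color)
  {Q B T : Finset Ball} {β γ : Color}

theorem colorClass_union :
    colorClass c (B ∪ T) γ = colorClass c B γ ∪ colorClass c T γ :=
  filter_union _ _ _

theorem colorClass_eq_self (h : ∀ x ∈ Q, c x = γ) : colorClass c Q γ = Q :=
  filter_true_of_mem h

theorem colorClass_eq_empty (h : ∀ x ∈ Q, c x ≠ γ) : colorClass c Q γ = ∅ :=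
  filter_false_of_mem h

theorem card_colorClass_le (Q : Finset Ball) (γ : Color) : #(colorClass c Q γ) ≤ #Q :=
  card_filter_le Q _

theorem card_colorClass_lt_iff : #(colorClass c Q γ) < #Q ↔ ∃ x ∈ Q, c x ≠ γ := by
  rw [(card_colorClass_le c Q γ).lt_iff_ne, Ne, colorClass, card_filter_eq_iff]
  push Not
  rfl

theorem colorClass_union_eq_left (hB : ∀ x ∈ B, c x = β) (hT : ∀ x ∈ T, c x ≠ β) :
    colorClass c (B ∪ T) β = B := by
  rw [colorClass_union, colorClass_eq_self c hB, colorClass_eq_empty c hT, union_empty]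

theorem colorClass_union_eq_right (hB : ∀ x ∈ B, c x = β) (hγ : γ ≠ β) :
    colorClass c (B ∪ T) γ = colorClass c T γ := by
  rw [colorClass_union, colorClass_eq_empty c fun x hx => (hB x hx).trans_ne hγ.symm,
    empty_union]

end ColorClass

theorem exists_color_ne_of_not_monochromatic {Ball Color : Type*} (c : Ball → Color)
    {T : Finset Ball} (h : ¬ ∀ x ∈ T, ∀ y ∈ T, c x = c y) (γ : Color) :
    ∃ x ∈ T, c x ≠ γ := by
  push Not at h
  obtain ⟨x, hx, y, hy, hxy⟩ := h
  by_cases hxγ : c x = γ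
  · exact ⟨y, hy, hxγ ▸ hxy.symm⟩
  · exact ⟨x, hx, hxγ⟩

theorem plurality_iff_not_monochromatic_general {Ball Color : Type*}
    [DecidableEq Ball] [DecidableEq Color]
    (c : Ball → Color) (l : ℕ) (β : Color)
    (B T : Finset Ball)
    (hBcard : B.card = l) (hB : ∀ x ∈ B, c x = β)
    (hTcard : T.card = l) (hT : ∀ x ∈ T, c x ≠ β) :
    (∃ p, IsPlurality c (B ∪ T) p) ↔ ¬ (∀ x ∈ T, ∀ y ∈ T, c x = c y) := by
  have hβ := colorClass_union_eq_left c hB hT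
  have hγ : ∀ γ ≠ β, colorClass c (B ∪ T) γ = colorClass c T γ :=
    fun _ => colorClass_union_eq_right c hB
  constructor
  · rintro ⟨p, hp, hmax⟩ hmono
    rcases mem_union.1 hp with hpB | hpT
    · obtain ⟨t, ht⟩ : T.Nonempty := card_pos.1 (hTcard ▸ hBcard ▸ card_pos.2 ⟨p, hpB⟩)
      have hlt := hmax (c t) (hB p hpB ▸ hT t ht)
      rw [hB p hpB, hβ, hγ _ (hT t ht), colorClass_eq_self c fun x hx => hmono x hx t ht] at hlt
      omega
    · have hlt := hmax β (hT p hpT).symm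
      rw [hβ, hγ _ (hT p hpT)] at hlt
      have := card_colorClass_le c T (c p)
      omega
  · intro hmono
    obtain ⟨t, ht, -⟩ := exists_color_ne_of_not_monochromatic c hmono β
    obtain ⟨b, hb⟩ : B.Nonempty := card_pos.1 (hBcard ▸ hTcard ▸ card_pos.2 ⟨t, ht⟩)
    refine ⟨b, mem_union_left T hb, fun γ hγb => ?_⟩
    rw [hB b hb] at hγb ⊢
    rw [hβ, hγ γ hγb, hBcard, ← hTcard, card_colorClass_lt_iff]
    exact exists_color_ne_of_not_monochromatic c hmono γ

/-- let `B` be `l ≥ 1` balls of color `β` and `T` be `l` balls disjoint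
from `B`, none of color `β`.  Then `B ∪ T` has a plurality ball iff `T` is not
monochromatic. -/
theorem plurality_iff_not_monochromatic {Ball Color : Type*}
    [DecidableEq Ball] [DecidableEq Color]
    (c : Ball → Color) (l : ℕ) (hl : 1 ≤ l) (β : Color)
    (B T : Finset Ball) (hdisj : Disjoint B T)
    (hBcard : B.card = l) (hB : ∀ x ∈ B, c x = β)
    (hTcard : T.card = l) (hT : ∀ x ∈ T, c x ≠ β) :
    (∃ p, IsPlurality c (B ∪ T) p) ↔ ¬ (∀ x ∈ T, ∀ y ∈ T, c x = c y) :=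
  plurality_iff_not_monochromatic_general c l β B T hBcard hB hTcard hT
end
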